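/- arXiv:1710.00428 — 2 statements merged into one kernel-verified Lean document; each statement's English description precedes it below -/
import Mathlib

section
/- Let u : ℝ → ℝ be four times continuously differentiable on [x − h₋, x + h₊], where h₋ > 0 and h₊ > 0, with |u'''(ξ)| ≤ M₃ and |u''''(ξ)| ≤ M₄ on this interval. Then the central second-difference on the nonuniform stencil satisfies | ( 2/(h₋ + h₊) ) · ( (u(x + h₊) − u(x))/h₊ − (u(x) − u(x − h₋))/h₋ ) − u''(x) | ≤ (M₃/3)·|h₊ − h₋| + (M₄/12)·(h₊² + h₋²). In particular, the approximation is first-order in general and second-order when h₊ = h₋. -/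
/-!
Expand `u` by Taylor's formula with Lagrange remainder of order four about `x`, once towards
`x + h₊` and once towards `x - h₋`. In the divided difference the terms in `u` and `u'` cancel,
the `u''` terms reproduce `u''(x)`, the `u'''` terms leave `(h₊ - h₋) u'''(x) / 3`, and the
remainders leave `(u⁗(ξ₊) h₊³ + u⁗(ξ₋) h₋³) / (12 (h₊ + h₋))`; the latter is bounded using
`h₊³ + h₋³ ≤ (h₊ + h₋)(h₊² + h₋²)`.
-/

open Set Nat

theorem iteratedDerivWithin_subset {𝕜 F : Type*} [NontriviallyNormedField 𝕜]
    [NormedAddCommGroup F] [NormedSpace 𝕜 F] {f : 𝕜 → F} {s t : Set 𝕜} {x : 𝕜} {n : ℕ}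
    (st : s ⊆ t) (hs : UniqueDiffOn 𝕜 s) (ht : UniqueDiffOn 𝕜 t) (hf : ContDiffOn 𝕜 n f t)
    (hx : x ∈ s) :
    iteratedDerivWithin n f s x = iteratedDerivWithin n f t x := by
  simp only [iteratedDerivWithin_eq_iteratedFDerivWithin,
    iteratedFDerivWithin_subset st hs ht hf hx]

theorem taylor_mean_remainder_lagrange_of_subset {f : ℝ → ℝ} {s : Set ℝ} {x₀ x : ℝ} {n : ℕ}
    (hx : x₀ ≠ x) (hs : UniqueDiffOn ℝ s) (hsub : uIcc x₀ x ⊆ s)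
    (hf : ContDiffOn ℝ (n + 1) f s) :
    ∃ ξ ∈ uIoo x₀ x, f x - taylorWithinEval f n s x₀ x =
      iteratedDerivWithin (n + 1) f s ξ * (x - x₀) ^ (n + 1) / (n + 1)! := by
  have hI : UniqueDiffOn ℝ (uIcc x₀ x) := uniqueDiffOn_uIcc hx
  have hfI : ContDiffOn ℝ (n + 1) f (uIcc x₀ x) := hf.mono hsub
  have hderiv : ∀ k ≤ n + 1, ∀ y ∈ uIcc x₀ x,
      iteratedDerivWithin k f (uIcc x₀ x) y = iteratedDerivWithin k f s y :=
    fun k hk y hy => iteratedDerivWithin_subset hsub hI hs (hf.of_le (by exact_mod_cast hk)) hy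
  have hdiff : DifferentiableOn ℝ (iteratedDerivWithin n f (uIcc x₀ x)) (uIoo x₀ x) :=
    (hfI.differentiableOn_iteratedDerivWithin (by exact_mod_cast Nat.lt_succ_self n) hI).mono
      uIoo_subset_uIcc_self
  obtain ⟨ξ, hξ, hT⟩ := taylor_mean_remainder_lagrange hx hfI.of_succ hdiff
  have htaylor : taylorWithinEval f n (uIcc x₀ x) x₀ x = taylorWithinEval f n s x₀ x := by
    simp only [taylor_within_apply]
    refine Finset.sum_congr rfl fun k hk => ?_
    rw [hderiv k (by rw [Finset.mem_range] at hk; omega) x₀ left_mem_uIcc]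
  refine ⟨ξ, hξ, ?_⟩
  rwa [htaylor, hderiv (n + 1) le_rfl ξ (uIoo_subset_uIcc_self hξ)] at hT

theorem taylorWithinEval_three (f : ℝ → ℝ) (s : Set ℝ) (x₀ x : ℝ) :
    taylorWithinEval f 3 s x₀ x = f x₀ + iteratedDerivWithin 1 f s x₀ * (x - x₀)
      + iteratedDerivWithin 2 f s x₀ * (x - x₀) ^ 2 / 2
      + iteratedDerivWithin 3 f s x₀ * (x - x₀) ^ 3 / 6 := by
  simp only [taylor_within_apply, Finset.sum_range_succ, Finset.sum_range_zero,
    iteratedDerivWithin_zero, smul_eq_mul]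
  norm_num [Nat.factorial]
  ring

theorem nonuniform_second_difference_sub_eq {hm hp um u0 up d1 d2 d3 a b : ℝ}
    (hhm : 0 < hm) (hhp : 0 < hp)
    (hup : up = u0 + d1 * hp + d2 * hp ^ 2 / 2 + d3 * hp ^ 3 / 6 + a * hp ^ 4 / 24)
    (hum : um = u0 - d1 * hm + d2 * hm ^ 2 / 2 - d3 * hm ^ 3 / 6 + b * hm ^ 4 / 24) :
    2 / (hm + hp) * ((up - u0) / hp - (u0 - um) / hm) - d2
      = (hp - hm) / 3 * d3 + (a * hp ^ 3 + b * hm ^ 3) / (12 * (hm + hp)) := by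
  subst hup hum
  field_simp
  ring

theorem abs_cubic_remainder_le {hm hp a b M : ℝ} (hhm : 0 < hm) (hhp : 0 < hp)
    (ha : |a| ≤ M) (hb : |b| ≤ M) :
    |(a * hp ^ 3 + b * hm ^ 3) / (12 * (hm + hp))| ≤ M / 12 * (hp ^ 2 + hm ^ 2) := by
  have hden : 0 < 12 * (hm + hp) := by positivity
  rw [abs_div, abs_of_pos hden, div_le_iff₀ hden]
  have hM : 0 ≤ M := (abs_nonneg a).trans ha
  calc |a * hp ^ 3 + b * hm ^ 3|
      ≤ |a * hp ^ 3| + |b * hm ^ 3| := abs_add_le _ _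
    _ = |a| * hp ^ 3 + |b| * hm ^ 3 := by
        rw [abs_mul, abs_mul, abs_of_pos (pow_pos hhp 3), abs_of_pos (pow_pos hhm 3)]
    _ ≤ M * (hp ^ 3 + hm ^ 3) := by nlinarith [pow_pos hhp 3, pow_pos hhm 3]
    _ ≤ M / 12 * (hp ^ 2 + hm ^ 2) * (12 * (hm + hp)) := by
        nlinarith [mul_nonneg hM (mul_nonneg (mul_nonneg hhp.le hhp.le) hhm.le),
          mul_nonneg hM (mul_nonneg (mul_nonneg hhm.le hhm.le) hhp.le)]

/-- Truncation-error estimate for the central second-difference on a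
nonuniform stencil with steps `h₋` (to the left) and `h₊` (to the right):
the error is bounded by `(M₃/3)|h₊ − h₋| + (M₄/12)(h₊² + h₋²)`, so the
approximation of `u''(x)` is first-order in general and second-order when
`h₊ = h₋`. -/
theorem central_second_difference_error
    (u : ℝ → ℝ) (x hm hp M₃ M₄ : ℝ) (hhm : 0 < hm) (hhp : 0 < hp)
    (hu : ContDiffOn ℝ 4 u (Set.Icc (x - hm) (x + hp)))
    (hM₃ : ∀ ξ ∈ Set.Icc (x - hm) (x + hp),
      |iteratedDerivWithin 3 u (Set.Icc (x - hm) (x + hp)) ξ| ≤ M₃)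
    (hM₄ : ∀ ξ ∈ Set.Icc (x - hm) (x + hp),
      |iteratedDerivWithin 4 u (Set.Icc (x - hm) (x + hp)) ξ| ≤ M₄) :
    |(2 / (hm + hp)) * ((u (x + hp) - u x) / hp - (u x - u (x - hm)) / hm)
        - iteratedDerivWithin 2 u (Set.Icc (x - hm) (x + hp)) x|
      ≤ (M₃ / 3) * |hp - hm| + (M₄ / 12) * (hp ^ 2 + hm ^ 2) := by
  set s := Icc (x - hm) (x + hp)
  have hs : UniqueDiffOn ℝ s := uniqueDiffOn_Icc (by linarith)
  have hxs : x ∈ s := ⟨by linarith, by linarith⟩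
  have hright : uIcc x (x + hp) ⊆ s := ordConnected_Icc.uIcc_subset hxs ⟨by linarith, le_rfl⟩
  have hleft : uIcc x (x - hm) ⊆ s := ordConnected_Icc.uIcc_subset hxs ⟨le_rfl, by linarith⟩
  obtain ⟨ξp, hξp, hTp⟩ := taylor_mean_remainder_lagrange_of_subset (n := 3)
    (by linarith : x ≠ x + hp) hs hright hu
  obtain ⟨ξm, hξm, hTm⟩ := taylor_mean_remainder_lagrange_of_subset (n := 3)
    (by linarith : x ≠ x - hm) hs hleft hu
  have h24 : ((3 + 1)! : ℝ) = 24 := by norm_num [Nat.factorial]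
  simp only [taylorWithinEval_three, h24, Nat.reduceAdd, add_sub_cancel_left, sub_sub_cancel_left]
    at hTp hTm
  rw [nonuniform_second_difference_sub_eq (u0 := u x) (d1 := iteratedDerivWithin 1 u s x)
    (d3 := iteratedDerivWithin 3 u s x) (a := iteratedDerivWithin 4 u s ξp)
    (b := iteratedDerivWithin 4 u s ξm) hhm hhp (by linear_combination hTp)
    (by linear_combination hTm)]
  calc _ ≤ |(hp - hm) / 3 * iteratedDerivWithin 3 u s x| + _ := abs_add_le _ _
    _ ≤ M₃ / 3 * |hp - hm| + M₄ / 12 * (hp ^ 2 + hm ^ 2) := by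
      gcongr
      · rw [abs_mul, abs_div, abs_of_pos (three_pos : (0 : ℝ) < 3)]
        nlinarith [hM₃ x hxs, abs_nonneg (hp - hm)]
      · exact abs_cubic_remainder_le hhm hhp
          (hM₄ _ (hright (uIoo_subset_uIcc_self hξp)))
          (hM₄ _ (hleft (uIoo_subset_uIcc_self hξm)))
end

section
/- Let x* ∈ ℝ, δ > 0, λ₁ > 0, λ₂ > 0, and let u : ℝ → ℝ be continuous at x*, three times continuously differentiable on [x* − δ, x*] and on [x*, x* + δ] (with one-sided derivatives at x*), with |u'''| ≤ M on both intervals, and suppose the ideal contact condition λ₁·u'(x*−) = λ₂·u'(x*+) holds. Let h, h', k, k' > 0 with h + h' ≤ δ and k + k' ≤ δ, and suppose the mesh ratios satisfy h/h' ≤ Q and k/k' ≤ Q. Then the residual of the discrete inner-boundary flux condition satisfies | λ₁·( h'(2h + h')u(x*) − (h + h')²u(x* − h) + h²u(x* − h − h') ) / ( h h'(h + h') ) + λ₂·( k'(2k + k')u(x*) − (k + k')²u(x* + k) + k²u(x* + k + k') ) / ( k k'(k + k') ) | ≤ C·(max(h + h', k + k'))², where C depends only on λ₁, λ₂, M, and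 Q. -/
/-!
Expand `u` to second order at `x*` separately on each side. A three-point one-sided stencil is
exact on quadratics, so it differs from the one-sided derivative only by a combination of the two
cubic Taylor remainders at its nodes; after division by the stencil denominator this is
`M · (h / h') · (h + h')²` up to a factor, which is where the mesh-ratio bound `Q` enters. The
contact condition makes the two one-sided derivatives cancel in the weighted sum.
-/

open Set
open scoped Nat

/-- Unlike `taylor_mean_remainder_bound`, the expansion point `y` may lie anywhere in the
interval. -/
theorem norm_sub_taylorWithinEval_le_of_mem_Icc {E : Type*} [NormedAddCommGroup E]
    [NormedSpace ℝ E] {f : ℝ → E} {a b C x y : ℝ} {n : ℕ} (hab : a < b)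
    (hf : ContDiffOn ℝ (n + 1) f (Icc a b))
    (hC : ∀ z ∈ Icc a b, ‖iteratedDerivWithin (n + 1) f (Icc a b) z‖ ≤ C)
    (hx : x ∈ Icc a b) (hy : y ∈ Icc a b) :
    ‖f x - taylorWithinEval f n (Icc a b) y x‖ ≤ C * |x - y| ^ (n + 1) / n ! := by
  have hsub : uIcc x y ⊆ Icc a b := uIcc_subset_Icc hx hy
  have hf' : DifferentiableOn ℝ (iteratedDerivWithin n f (Icc a b)) (Icc a b) :=
    hf.differentiableOn_iteratedDerivWithin (mod_cast n.lt_succ_self) (uniqueDiffOn_Icc hab)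
  have hderiv : ∀ t ∈ uIcc x y, HasDerivWithinAt (fun z ↦ taylorWithinEval f n (Icc a b) z x)
      (((n ! : ℝ)⁻¹ * (x - t) ^ n) • iteratedDerivWithin (n + 1) f (Icc a b) t) (uIcc x y) t :=
    fun t ht ↦ (hasDerivWithinAt_taylorWithinEval_at_Icc x hab (hsub ht) hf.of_succ hf').mono hsub
  have hbound : ∀ t ∈ uIcc x y,
      ‖((n ! : ℝ)⁻¹ * (x - t) ^ n) • iteratedDerivWithin (n + 1) f (Icc a b) t‖
        ≤ (n ! : ℝ)⁻¹ * |x - y| ^ n * C := by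
    intro t ht
    rw [norm_smul, Real.norm_eq_abs, abs_mul, abs_pow, abs_inv, Nat.abs_cast]
    have hxt : |x - t| ≤ |x - y| := by
      simpa only [abs_sub_comm x] using abs_sub_left_of_mem_uIcc ht
    gcongr
    exact hC t (hsub ht)
  have := Convex.norm_image_sub_le_of_norm_hasDerivWithin_le hderiv hbound (convex_uIcc x y)
    right_mem_uIcc left_mem_uIcc
  rw [taylorWithinEval_self, Real.norm_eq_abs] at this
  refine this.trans_eq ?_
  ring

theorem taylorWithinEval_two (f : ℝ → ℝ) (s : Set ℝ) (y x : ℝ) :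
    taylorWithinEval f 2 s y x
      = f y + derivWithin f s y * (x - y) + iteratedDerivWithin 2 f s y * (x - y) ^ 2 / 2 := by
  simp only [taylorWithinEval_succ, taylor_within_apply, zero_add, Finset.range_one, smul_eq_mul,
    Finset.sum_singleton, Nat.factorial_zero, Nat.cast_one, inv_one, pow_zero, mul_one,
    iteratedDerivWithin_zero, one_mul, CharP.cast_eq_zero, pow_one, iteratedDerivWithin_one,
    Nat.factorial_one, Nat.reduceAdd]
  ring

theorem abs_sub_taylor_two_le_of_mem_Icc {f : ℝ → ℝ} {a b M x y : ℝ} (hab : a < b)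
    (hf : ContDiffOn ℝ 3 f (Icc a b))
    (hM : ∀ z ∈ Icc a b, |iteratedDerivWithin 3 f (Icc a b) z| ≤ M)
    (hx : x ∈ Icc a b) (hy : y ∈ Icc a b) :
    |f x - (f y + derivWithin f (Icc a b) y * (x - y)
      + iteratedDerivWithin 2 f (Icc a b) y * (x - y) ^ 2 / 2)| ≤ M / 2 * |x - y| ^ 3 := by
  have := norm_sub_taylorWithinEval_le_of_mem_Icc (n := 2) hab hf hM hx hy
  rw [taylorWithinEval_two, Real.norm_eq_abs] at this
  refine this.trans_eq ?_
  norm_num [Nat.factorial]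
  ring

/-- The three-point approximation of `f' x` from the nodes `x`, `x + a`, `x + a + a'`. The steps
are signed: negative steps give the backward stencil. -/
noncomputable def threePointDeriv (f : ℝ → ℝ) (x a a' : ℝ) : ℝ :=
  ((a + a') ^ 2 * f (x + a) - a ^ 2 * f (x + a + a') - a' * (2 * a + a') * f x)
    / (a * a' * (a + a'))

-- `B` is arbitrary: the stencil is exact on quadratics.
theorem threePointDeriv_sub_eq (f : ℝ → ℝ) (x A B : ℝ) {a a' : ℝ} (ha : a ≠ 0) (ha' : a' ≠ 0)
    (haa' : a + a' ≠ 0) :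
    threePointDeriv f x a a' - A =
      ((a + a') ^ 2 * (f (x + a) - (f x + A * a + B * a ^ 2 / 2))
        - a ^ 2 * (f (x + a + a') - (f x + A * (a + a') + B * (a + a') ^ 2 / 2)))
        / (a * a' * (a + a')) := by
  rw [threePointDeriv]
  field_simp
  ring

theorem abs_threePointDeriv_sub_le {f : ℝ → ℝ} {x A B K a a' : ℝ} (ha : a ≠ 0) (ha' : a' ≠ 0)
    (hle : |a| ≤ |a + a'|)
    (h₁ : |f (x + a) - (f x + A * a + B * a ^ 2 / 2)| ≤ K * |a| ^ 3)
    (h₂ : |f (x + a + a') - (f x + A * (a + a') + B * (a + a') ^ 2 / 2)| ≤ K * |a + a'| ^ 3) :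
    |threePointDeriv f x a a' - A| ≤ 2 * K * |a / a'| * (a + a') ^ 2 := by
  have hpos : 0 < |a| := abs_pos.2 ha
  have haa' : a + a' ≠ 0 := abs_pos.1 (hpos.trans_le hle)
  have hK : 0 ≤ K := nonneg_of_mul_nonneg_left ((abs_nonneg _).trans h₁) (by positivity)
  rw [threePointDeriv_sub_eq f x A B ha ha' haa', abs_div, div_le_iff₀ (by positivity)]
  calc _ ≤ (a + a') ^ 2 * (K * |a| ^ 3) + a ^ 2 * (K * |a + a'| ^ 3) := by
        refine (abs_sub _ _).trans ?_
        rw [abs_mul, abs_mul, abs_of_nonneg (sq_nonneg (a + a')), abs_of_nonneg (sq_nonneg a)]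
        gcongr
    _ = K * |a| ^ 2 * |a + a'| ^ 2 * (|a| + |a + a'|) := by
        rw [← sq_abs a, ← sq_abs (a + a')]
        ring
    _ ≤ K * |a| ^ 2 * |a + a'| ^ 2 * (2 * |a + a'|) := by gcongr; linarith
    _ = 2 * K * |a / a'| * (a + a') ^ 2 * |a * a' * (a + a')| := by
        rw [abs_div, abs_mul, abs_mul, ← sq_abs (a + a')]
        field_simp

theorem threePointDeriv_neg (f : ℝ → ℝ) (x a a' : ℝ) :
    threePointDeriv f x (-a) (-a') =
      (a' * (2 * a + a') * f x - (a + a') ^ 2 * f (x - a) + a ^ 2 * f (x - a - a'))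
        / (a * a' * (a + a')) := by
  rw [threePointDeriv, show -a * -a' * (-a + -a') = -(a * a' * (a + a')) by ring, div_neg]
  simp only [← sub_eq_add_neg]
  ring

theorem abs_threePointDeriv_sub_derivWithin_le {u : ℝ → ℝ} {b c M x a a' : ℝ} (hbc : b < c)
    (hu : ContDiffOn ℝ 3 u (Icc b c))
    (hM : ∀ z ∈ Icc b c, |iteratedDerivWithin 3 u (Icc b c) z| ≤ M)
    (hx : x ∈ Icc b c) (h₁ : x + a ∈ Icc b c) (h₂ : x + a + a' ∈ Icc b c)
    (ha : a ≠ 0) (ha' : a' ≠ 0) (hle : |a| ≤ |a + a'|) :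
    |threePointDeriv u x a a' - derivWithin u (Icc b c) x| ≤ M * |a / a'| * (a + a') ^ 2 := by
  have taylor := fun {y} (hy : y ∈ Icc b c) ↦ abs_sub_taylor_two_le_of_mem_Icc hbc hu hM hy hx
  have e₁ := taylor h₁
  have e₂ := taylor h₂
  rw [add_sub_cancel_left] at e₁
  rw [add_assoc, add_sub_cancel_left, ← add_assoc] at e₂
  refine (abs_threePointDeriv_sub_le ha ha' hle (K := M / 2) e₁ e₂).trans_eq ?_
  ring

theorem abs_threePointDeriv_sub_derivWithin_Icc_right_le {u : ℝ → ℝ} {x δ M a a' : ℝ}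
    (hu : ContDiffOn ℝ 3 u (Icc x (x + δ)))
    (hM : ∀ z ∈ Icc x (x + δ), |iteratedDerivWithin 3 u (Icc x (x + δ)) z| ≤ M)
    (ha : 0 < a) (ha' : 0 < a') (hδ : a + a' ≤ δ) :
    |threePointDeriv u x a a' - derivWithin u (Icc x (x + δ)) x| ≤ M * (a / a') * (a + a') ^ 2 := by
  have hle : |a| ≤ |a + a'| := by
    rw [abs_of_pos ha, abs_of_pos (add_pos ha ha')]
    linarith
  rw [← abs_of_pos (div_pos ha ha')]
  exact abs_threePointDeriv_sub_derivWithin_le (by linarith) hu hM ⟨le_rfl, by linarith⟩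
    ⟨by linarith, by linarith⟩ ⟨by linarith, by linarith⟩ ha.ne' ha'.ne' hle

theorem abs_threePointDeriv_neg_sub_derivWithin_Icc_left_le {u : ℝ → ℝ} {x δ M a a' : ℝ}
    (hu : ContDiffOn ℝ 3 u (Icc (x - δ) x))
    (hM : ∀ z ∈ Icc (x - δ) x, |iteratedDerivWithin 3 u (Icc (x - δ) x) z| ≤ M)
    (ha : 0 < a) (ha' : 0 < a') (hδ : a + a' ≤ δ) :
    |threePointDeriv u x (-a) (-a') - derivWithin u (Icc (x - δ) x) x|
      ≤ M * (a / a') * (a + a') ^ 2 := by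
  have hle : |-a| ≤ |-a + -a'| := by
    rw [← neg_add, abs_neg, abs_neg, abs_of_pos ha, abs_of_pos (add_pos ha ha')]
    linarith
  rw [← abs_of_pos (div_pos ha ha'), ← neg_div_neg_eq, ← neg_sq, neg_add]
  exact abs_threePointDeriv_sub_derivWithin_le (by linarith) hu hM ⟨by linarith, le_rfl⟩
    ⟨by linarith, by linarith⟩ ⟨by linarith, by linarith⟩ (neg_ne_zero.2 ha.ne')
    (neg_ne_zero.2 ha'.ne') hle

/-- Second-order consistency of the five-point discretization of the ideal
contact (inner-boundary flux) condition `λ₁·u'(x*−) = λ₂·u'(x*+)` at a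
discontinuity point `x*`, using a backward one-sided three-point stencil with
steps `h, h'` on the left and a forward one-sided three-point stencil with
steps `k, k'` on the right; the constant `C` depends only on `λ₁, λ₂, M, Q`. -/
theorem inner_boundary_flux_condition_second_order_consistency
    (l₁ l₂ M Q : ℝ) (hl₁ : 0 < l₁) (hl₂ : 0 < l₂) :
    ∃ C : ℝ, 0 < C ∧
      ∀ (xs δ : ℝ) (u : ℝ → ℝ), 0 < δ →
        ContinuousAt u xs →
        ContDiffOn ℝ 3 u (Set.Icc (xs - δ) xs) →
        ContDiffOn ℝ 3 u (Set.Icc xs (xs + δ)) →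
        (∀ ξ ∈ Set.Icc (xs - δ) xs,
          |iteratedDerivWithin 3 u (Set.Icc (xs - δ) xs) ξ| ≤ M) →
        (∀ ξ ∈ Set.Icc xs (xs + δ),
          |iteratedDerivWithin 3 u (Set.Icc xs (xs + δ)) ξ| ≤ M) →
        l₁ * derivWithin u (Set.Icc (xs - δ) xs) xs
          = l₂ * derivWithin u (Set.Icc xs (xs + δ)) xs →
        ∀ h h' k k' : ℝ, 0 < h → 0 < h' → 0 < k → 0 < k' →
          h + h' ≤ δ → k + k' ≤ δ → h / h' ≤ Q → k / k' ≤ Q →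
          |l₁ * ((h' * (2 * h + h') * u xs - (h + h') ^ 2 * u (xs - h)
                + h ^ 2 * u (xs - h - h')) / (h * h' * (h + h')))
            + l₂ * ((k' * (2 * k + k') * u xs - (k + k') ^ 2 * u (xs + k)
                + k ^ 2 * u (xs + k + k')) / (k * k' * (k + k')))|
            ≤ C * (max (h + h') (k + k')) ^ 2 := by
  refine ⟨(l₁ + l₂) * max (M * Q) 1, by positivity, ?_⟩
  intro xs δ u hδ _ hu₁ hu₂ hM₁ hM₂ hcontact h h' k k' hh hh' hk hk' hhδ hkδ hQh hQk
  set m := max (h + h') (k + k')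
  set D₁ := threePointDeriv u xs (-h) (-h') - derivWithin u (Icc (xs - δ) xs) xs with hD₁
  set D₂ := threePointDeriv u xs k k' - derivWithin u (Icc xs (xs + δ)) xs with hD₂
  have hM : 0 ≤ M := (abs_nonneg _).trans (hM₁ xs ⟨by linarith, le_rfl⟩)
  have hQ : 0 ≤ Q := (div_pos hh hh').le.trans hQh
  have hD₁_le : |D₁| ≤ M * Q * m ^ 2 :=
    (abs_threePointDeriv_neg_sub_derivWithin_Icc_left_le hu₁ hM₁ hh hh' hhδ).trans
      (by gcongr; exact le_max_left _ _)
  have hD₂_le : |D₂| ≤ M * Q * m ^ 2 :=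
    (abs_threePointDeriv_sub_derivWithin_Icc_right_le hu₂ hM₂ hk hk' hkδ).trans
      (by gcongr; exact le_max_right _ _)
  have hflux : l₁ * ((h' * (2 * h + h') * u xs - (h + h') ^ 2 * u (xs - h)
                + h ^ 2 * u (xs - h - h')) / (h * h' * (h + h')))
            + l₂ * ((k' * (2 * k + k') * u xs - (k + k') ^ 2 * u (xs + k)
                + k ^ 2 * u (xs + k + k')) / (k * k' * (k + k')))
      = l₁ * D₁ - l₂ * D₂ := by
    rw [hD₁, hD₂, threePointDeriv_neg, threePointDeriv]
    linear_combination hcontact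
  calc _ = |l₁ * D₁ - l₂ * D₂| := by rw [hflux]
    _ ≤ l₁ * |D₁| + l₂ * |D₂| := by
        refine (abs_sub _ _).trans_eq ?_
        rw [abs_mul, abs_mul, abs_of_pos hl₁, abs_of_pos hl₂]
    _ ≤ (l₁ + l₂) * (M * Q) * m ^ 2 := by nlinarith
    _ ≤ (l₁ + l₂) * max (M * Q) 1 * m ^ 2 := by gcongr; exact le_max_left _ _
end
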